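/- Let G = (g_{ij}) be a Hermitian 4×4 complex matrix with g_{ii} = 0, g₁₂ = g₂₃ = g₃₄ = 1, |g₁₃| = 1, g₁₄ ≠ 0, g₂₄ ≠ 0. Then there exist four nonzero null vectors P₁,P₂,P₃,P₄ in ℂ^{2,1}, pairwise linearly independent, with ⟨P_i,P_j⟩ = g_{ij} for all i,j, if and only if Re(g₁₃) ≤ 0, Re(g₂₄·conj(g₁₄)) ≤ 0, and det G = 0. -/

import Mathlib

open Complex Matrix
open scoped ComplexConjugate

noncomputable section

/-- The Hermitian form of signature `(n,1)` on `ℂ^{n+1}`: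
`⟨Z,W⟩ = Z₁·conj W_{n+1} + Z₂·conj W₂ + ⋯ + Z_n·conj W_n + Z_{n+1}·conj W₁`. -/
def herm {n : ℕ} (Z W : Fin (n + 1) → ℂ) : ℂ :=
  Z 0 * conj (W (Fin.last n)) + Z (Fin.last n) * conj (W 0) +
    ∑ i ∈ Finset.univ.filter (fun i : Fin (n + 1) => i ≠ 0 ∧ i ≠ Fin.last n),
      Z i * conj (W i)

/-- The Gram matrix of a quadruple of vectors. -/
def gram {n : ℕ} (P : Fin 4 → Fin (n + 1) → ℂ) : Matrix (Fin 4) (Fin 4) ℂ :=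
  fun i j => herm (P i) (P j)

/-- A quadruple of nonzero null vectors, pairwise linearly independent. -/
def IsNullQuadruple {n : ℕ} (P : Fin 4 → Fin (n + 1) → ℂ) : Prop :=
  (∀ i, P i ≠ 0) ∧ (∀ i, herm (P i) (P i) = 0) ∧
    ∀ i j, i ≠ j → LinearIndependent ℂ ![P i, P j]

/-- The Korányi–Reimann complex cross-ratio. -/
def crossRatio {n : ℕ} (P₁ P₂ P₃ P₄ : Fin (n + 1) → ℂ) : ℂ :=
  (herm P₃ P₁ * herm P₄ P₂) / (herm P₄ P₁ * herm P₃ P₂)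

/-- Cartan's angular invariant. -/
def cartan {n : ℕ} (P₁ P₂ P₃ : Fin (n + 1) → ℂ) : ℝ :=
  (-(herm P₁ P₂ * herm P₂ P₃ * herm P₃ P₁)).arg

/-- `G` is the normalized Gram matrix of the quadruple `P`. -/
def IsNormalizedGram {n : ℕ} (P : Fin 4 → Fin (n + 1) → ℂ)
    (G : Matrix (Fin 4) (Fin 4) ℂ) : Prop :=
  (∃ d : Fin 4 → ℂ, (∀ i, d i ≠ 0) ∧
      G = (Matrix.diagonal d)ᴴ * gram P * Matrix.diagonal d) ∧
    G 0 1 = 1 ∧ G 1 2 = 1 ∧ G 2 3 = 1 ∧ ‖G 0 2‖ = 1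

/-- Two quadruples are congruent if a linear map preserving the Hermitian form
sends one to the other up to nonzero scalars. -/
def HermCongruent {n : ℕ} (P P' : Fin 4 → Fin (n + 1) → ℂ) : Prop :=
  ∃ A : (Fin (n + 1) → ℂ) →ₗ[ℂ] (Fin (n + 1) → ℂ),
    (∀ Z W, herm (A Z) (A W) = herm Z W) ∧
    ∃ lam : Fin 4 → ℂ, (∀ i, lam i ≠ 0) ∧ ∀ i, A (P i) = lam i • P' i

/-!
Three null vectors `Z₁, Z₂, Z₃` of `ℂ^{2,1}` have Gram matrix `A J Aᴴ`, where `A` has rows `Zᵢ`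
and `det J = -1`, so its determinant is `-|det A|² ≤ 0`; as the diagonal vanishes, that
determinant is `2 Re (⟨Z₁,Z₂⟩⟨Z₂,Z₃⟩⟨Z₃,Z₁⟩)`. Applied to `(P₁,P₂,P₃)` and `(P₁,P₂,P₄)` this gives
the two sign conditions, and `det G = 0` since four vectors of `ℂ³` have a Gram matrix of rank `≤ 3`.

Conversely, `G` is determined by `g₁₃, g₁₄, g₂₄`, and one takes `P₁ = e₁`, `P₂ = e₃`,
`P₃ = (1, b, ḡ₁₃)`, `P₄ = (ḡ₂₄, y, ḡ₁₄)` with `b² = -2 Re g₁₃`. Then `⟨P₃,P₄⟩ = 1` and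
`⟨P₄,P₄⟩ = 0` ask for `b ȳ = 1 - g₁₄ - ḡ₁₃ g₂₄` and `|y|² = -2 Re (g₂₄ ḡ₁₄)`, which is solvable
exactly because `det G = |1 - g₁₄ - ḡ₁₃ g₂₄|² - 4 Re g₁₃ Re (g₂₄ ḡ₁₄)` vanishes. Null vectors with
nonzero pairing are linearly independent, so the quadruple is pairwise independent.
-/

lemma herm_fin_three (Z W : Fin 3 → ℂ) :
    herm Z W = Z 0 * conj (W 2) + Z 2 * conj (W 0) + Z 1 * conj (W 1) := by
  have : Finset.univ.filter (fun i : Fin 3 => i ≠ 0 ∧ i ≠ Fin.last 2) = {1} := by decide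
  rw [herm, this, Finset.sum_singleton]
  rfl

section
variable {n : ℕ}

lemma herm_conj_symm (Z W : Fin (n + 1) → ℂ) : conj (herm W Z) = herm Z W := by
  simp only [herm, map_add, map_sum, map_mul, conj_conj]
  rw [add_comm (_ * _) (_ * _)]
  congr 1
  · ring
  · exact Finset.sum_congr rfl fun _ _ => mul_comm _ _

lemma herm_zero_left (W : Fin (n + 1) → ℂ) : herm 0 W = 0 := by
  simp [herm]

lemma herm_add_left (Z Z' W : Fin (n + 1) → ℂ) : herm (Z + Z') W = herm Z W + herm Z' W := by
  simp only [herm, Pi.add_apply, add_mul, Finset.sum_add_distrib]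
  ring

lemma herm_smul_left (c : ℂ) (Z W : Fin (n + 1) → ℂ) : herm (c • Z) W = c * herm Z W := by
  simp only [herm, Pi.smul_apply, smul_eq_mul, mul_add, Finset.mul_sum, mul_assoc]

lemma linearIndependent_pair_of_herm_ne_zero {v w : Fin (n + 1) → ℂ} (hv : herm v v = 0)
    (hw : herm w w = 0) (hvw : herm v w ≠ 0) : LinearIndependent ℂ ![v, w] := by
  rw [LinearIndependent.pair_iff]
  intro s t hst
  have hwv : herm w v ≠ 0 := by rwa [← herm_conj_symm, map_ne_zero]
  have hpair : ∀ x, s * herm v x + t * herm w x = 0 := fun x => by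
    rw [← herm_smul_left, ← herm_smul_left, ← herm_add_left, hst, herm_zero_left]
  have e1 := hpair w
  have e2 := hpair v
  rw [hw, mul_zero, add_zero] at e1
  rw [hv, mul_zero, zero_add] at e2
  exact ⟨(mul_eq_zero.mp e1).resolve_right hvw, (mul_eq_zero.mp e2).resolve_right hwv⟩

lemma isNullQuadruple_of_herm {P : Fin 4 → Fin (n + 1) → ℂ} (hnull : ∀ i, herm (P i) (P i) = 0)
    (hne : ∀ i j, i ≠ j → herm (P i) (P j) ≠ 0) : IsNullQuadruple P := by
  have hli : ∀ i j, i ≠ j → LinearIndependent ℂ ![P i, P j] := fun i j hij =>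
    linearIndependent_pair_of_herm_ne_zero (hnull i) (hnull j) (hne i j hij)
  refine ⟨fun i => ?_, hnull, hli⟩
  obtain ⟨j, hji⟩ := exists_ne i
  simpa using (hli i j hji.symm).ne_zero 0

end

def hermMatrix : Matrix (Fin 3) (Fin 3) ℂ := !![0, 0, 1; 0, 1, 0; 1, 0, 0]

lemma of_herm_eq_mul {ι : Type*} (P : ι → Fin 3 → ℂ) :
    Matrix.of (fun i j => herm (P i) (P j)) = Matrix.of P * hermMatrix * (Matrix.of P)ᴴ := by
  ext i j
  simp [herm_fin_three, hermMatrix, Matrix.mul_apply, Fin.sum_univ_three]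
  ring

lemma det_hermMatrix : hermMatrix.det = -1 := by
  simp [hermMatrix, Matrix.det_fin_three]

lemma det_of_herm_eq_zero {ι : Type*} [Fintype ι] [DecidableEq ι] (hι : 3 < Fintype.card ι)
    (P : ι → Fin 3 → ℂ) : (Matrix.of fun i j => herm (P i) (P j)).det = 0 := by
  by_contra hdet
  have hrank := Matrix.rank_of_isUnit _ ((Matrix.isUnit_iff_isUnit_det _).mpr (Ne.isUnit hdet))
  have : (Matrix.of fun i j => herm (P i) (P j)).rank ≤ 3 := by
    rw [of_herm_eq_mul]
    calc _ ≤ (Matrix.of P * hermMatrix).rank := Matrix.rank_mul_le_left _ _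
      _ ≤ (Matrix.of P).rank := Matrix.rank_mul_le_left _ _
      _ ≤ 3 := by simpa using Matrix.rank_le_card_width (Matrix.of P)
  omega

lemma re_herm_mul_herm_mul_herm_nonpos {Z₁ Z₂ Z₃ : Fin 3 → ℂ} (h₁ : herm Z₁ Z₁ = 0)
    (h₂ : herm Z₂ Z₂ = 0) (h₃ : herm Z₃ Z₃ = 0) :
    (herm Z₁ Z₂ * herm Z₂ Z₃ * herm Z₃ Z₁).re ≤ 0 := by
  set t := herm Z₁ Z₂ * herm Z₂ Z₃ * herm Z₃ Z₁
  set d := (Matrix.of ![Z₁, Z₂, Z₃]).det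
  have hdet : t + conj t = -(d * conj d) := by
    have h := congrArg Matrix.det (of_herm_eq_mul ![Z₁, Z₂, Z₃])
    rw [Matrix.det_mul, Matrix.det_mul, det_hermMatrix, Matrix.det_conjTranspose,
      Matrix.det_fin_three] at h
    simp only [of_apply, Matrix.cons_val, h₁, h₂, h₃] at h
    simp only [t, map_mul, herm_conj_symm, Complex.star_def] at h ⊢
    linear_combination h
  have := congrArg Complex.re hdet
  rw [add_re, conj_re, mul_conj, neg_re, ofReal_re] at this
  linarith [normSq_nonneg d]

def normalizedGram (g₁₃ g₁₄ g₂₄ : ℂ) : Matrix (Fin 4) (Fin 4) ℂ :=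
  !![0, 1, g₁₃, g₁₄; 1, 0, 1, g₂₄; conj g₁₃, 1, 0, 1; conj g₁₄, conj g₂₄, 1, 0]

lemma eq_normalizedGram {G : Matrix (Fin 4) (Fin 4) ℂ} (hG : G.IsHermitian) (hdiag : ∀ i, G i i = 0)
    (h₁₂ : G 0 1 = 1) (h₂₃ : G 1 2 = 1) (h₃₄ : G 2 3 = 1) :
    G = normalizedGram (G 0 2) (G 0 3) (G 1 3) := by
  have hG' : ∀ i j, G i j = conj (G j i) := fun i j => (hG.apply i j).symm
  ext i j
  fin_cases i <;> fin_cases j <;>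
    simp [normalizedGram, hdiag, h₁₂, h₂₃, h₃₄, hG' 1 0, hG' 2 0, hG' 2 1, hG' 3 0, hG' 3 1, hG' 3 2]

lemma det_normalizedGram (g₁₃ g₁₄ g₂₄ : ℂ) :
    (normalizedGram g₁₃ g₁₄ g₂₄).det =
      (normSq (1 - g₁₄ - conj g₁₃ * g₂₄) - 4 * g₁₃.re * (g₂₄ * conj g₁₄).re : ℝ) := by
  rw [ofReal_sub, ← mul_conj,
    show ((4 * g₁₃.re * (g₂₄ * conj g₁₄).re : ℝ) : ℂ) =
      ((2 * g₁₃.re : ℝ) : ℂ) * ((2 * (g₂₄ * conj g₁₄).re : ℝ) : ℂ) by push_cast; ring,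
    ← add_conj, ← add_conj]
  rw [normalizedGram, Matrix.det_succ_row_zero]
  simp [Fin.sum_univ_succ, Matrix.det_fin_three, Fin.succAbove]
  ring

lemma exists_ofReal_mul_conj_eq {b c : ℝ} (hb : 0 ≤ b) (hc : 0 ≤ c) {s : ℂ}
    (hs : normSq s = b ^ 2 * c) : ∃ y : ℂ, b * conj y = s ∧ normSq y = c := by
  rcases hb.eq_or_lt with rfl | hbpos
  · refine ⟨Real.sqrt c, ?_, ?_⟩
    · rw [zero_pow two_ne_zero, zero_mul, normSq_eq_zero] at hs
      simp [hs]
    · rw [normSq_ofReal, Real.mul_self_sqrt hc]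
  · have hb0 : (b : ℂ) ≠ 0 := ofReal_ne_zero.mpr hbpos.ne'
    refine ⟨conj s / b, ?_, ?_⟩
    · rw [map_div₀, conj_conj, conj_ofReal, mul_div_cancel₀ _ hb0]
    · rw [normSq_div, normSq_conj, normSq_ofReal, hs]
      field_simp

lemma exists_herm_eq_normalizedGram {g₁₃ g₁₄ g₂₄ : ℂ} (h₁₃ : g₁₃.re ≤ 0)
    (h₂₄ : (g₂₄ * conj g₁₄).re ≤ 0) (hdet : (normalizedGram g₁₃ g₁₄ g₂₄).det = 0) :
    ∃ P : Fin 4 → Fin 3 → ℂ, ∀ i j, herm (P i) (P j) = normalizedGram g₁₃ g₁₄ g₂₄ i j := by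
  obtain ⟨b, hb0, hb2⟩ : ∃ b : ℝ, 0 ≤ b ∧ b ^ 2 = -2 * g₁₃.re :=
    ⟨√(-2 * g₁₃.re), Real.sqrt_nonneg _, Real.sq_sqrt (by linarith)⟩
  have hs : normSq (1 - g₁₄ - conj g₁₃ * g₂₄) = b ^ 2 * (-2 * (g₂₄ * conj g₁₄).re) := by
    rw [det_normalizedGram, ofReal_eq_zero] at hdet
    rw [hb2]
    linarith
  obtain ⟨y, hy, hyy⟩ := exists_ofReal_mul_conj_eq hb0 (by linarith) hs
  have hb : (b : ℂ) * b = -(g₁₃ + conj g₁₃) := by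
    rw [← ofReal_mul, ← sq, hb2, add_conj]
    push_cast; ring
  have hy' : b * y = 1 - conj g₁₄ - g₁₃ * conj g₂₄ := by
    simpa using congrArg conj hy
  have hyy' : y * conj y = -(g₂₄ * conj g₁₄ + conj g₂₄ * g₁₄) := by
    rw [mul_conj, hyy]
    push_cast
    rw [re_eq_add_conj]
    simp only [map_mul, conj_conj]
    ring
  refine ⟨![![1, 0, 0], ![0, 0, 1], ![1, b, conj g₁₃], ![conj g₂₄, y, conj g₁₄]], fun i j => ?_⟩
  fin_cases i <;> fin_cases j <;> simp [herm_fin_three, normalizedGram]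
  · linear_combination hb
  · linear_combination hy
  · linear_combination hy'
  · linear_combination hyy'

lemma exists_isNullQuadruple_iff {g₁₃ g₁₄ g₂₄ : ℂ} (h₁₃ : g₁₃ ≠ 0) (h₁₄ : g₁₄ ≠ 0)
    (h₂₄ : g₂₄ ≠ 0) :
    (∃ P : Fin 4 → Fin 3 → ℂ, IsNullQuadruple P ∧
        ∀ i j, herm (P i) (P j) = normalizedGram g₁₃ g₁₄ g₂₄ i j) ↔
      g₁₃.re ≤ 0 ∧ (g₂₄ * conj g₁₄).re ≤ 0 ∧ (normalizedGram g₁₃ g₁₄ g₂₄).det = 0 := by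
  constructor
  · rintro ⟨P, ⟨-, hnull, -⟩, hP⟩
    refine ⟨?_, ?_, ?_⟩
    · simpa [hP, normalizedGram] using re_herm_mul_herm_mul_herm_nonpos (hnull 0) (hnull 1) (hnull 2)
    · simpa [hP, normalizedGram] using re_herm_mul_herm_mul_herm_nonpos (hnull 0) (hnull 1) (hnull 3)
    · rw [← Matrix.ext hP]
      exact det_of_herm_eq_zero (by simp) P
  · rintro ⟨h₁₃_re, h₂₄_re, hdet⟩
    obtain ⟨P, hP⟩ := exists_herm_eq_normalizedGram h₁₃_re h₂₄_re hdet
    refine ⟨P, isNullQuadruple_of_herm (fun i => ?_) (fun i j hij => ?_), hP⟩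
    · rw [hP]; fin_cases i <;> rfl
    · rw [hP]; fin_cases i <;> fin_cases j <;> simp_all [normalizedGram]

/-- characterization of normalized Gram matrices of quadruples of
distinct points in `∂ℂH²`. -/
theorem stmt8 (G : Matrix (Fin 4) (Fin 4) ℂ) (hherm : G.IsHermitian)
    (hdiag : ∀ i, G i i = 0)
    (h12 : G 0 1 = 1) (h23 : G 1 2 = 1) (h34 : G 2 3 = 1)
    (h13 : ‖G 0 2‖ = 1) (h14 : G 0 3 ≠ 0) (h24 : G 1 3 ≠ 0) :
    (∃ P : Fin 4 → Fin 3 → ℂ, IsNullQuadruple (n := 2) P ∧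
        ∀ i j, herm (P i) (P j) = G i j) ↔
      (G 0 2).re ≤ 0 ∧ (G 1 3 * conj (G 0 3)).re ≤ 0 ∧ G.det = 0 := by
  rw [eq_normalizedGram hherm hdiag h12 h23 h34]
  exact exists_isNullQuadruple_iff (norm_ne_zero_iff.mp (h13 ▸ one_ne_zero)) h14 h24
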